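/- (Exact resolution of stationary contact discontinuities.) Let e, σ : (0,∞) → ℝ and let ρ_L, ρ_R, p > 0 with ρ_L ≠ ρ_R. For K ∈ {L,R} set θ_K = p/ρ_K, z₂,K = ρ_K/p, h_K = 1 + e(θ_K) + θ_K, S_K = −ln ρ_K + σ(θ_K); the two states have zero velocity, so their entropy variables are W_K = (z₂,K h_K − S_K, 0, −z₂,K) ∈ ℝ³. Define E = ([W₁] − [ln ρ])/[z₂] (with [a] = a_R − a_L) and the averaged enthalpy h̄ = E + 1/{{z₂}}_ln where {{z₂}}_ln = [z₂]/[ln z₂]. Let θ̄ > 0, ρ̄ > 0, and E′ > 0 be arbitrary averaged values with h̄E′ > 0, and set c̄ = √(θ̄(1+E′)/(h̄E′)). Define the dissipation matrix D = R̃ · diag(c̄, 0, c̄) · D̃ · R̃ᵀ, where R̃ = [[1, 1, 1], [−c̄h̄, 0, c̄h̄], [h̄, h̄−θ̄(1+E′), h̄]] and D̃ = diag(ρ̄E′/(2(1+E′)), ρ̄/(1+E′), ρ̄E′/(2(1+E′))). Then D·(W_R − W_L) = (c̄ρ̄E′/(1+E′))·([W₁] − h̄[z₂])·(1, 0, h̄)ᵀ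 = 0; that is, the entropy stable flux reduces to the entropy conservative flux on a stationary contact discontinuity. -/

import Mathlib

/-!
On a zero-velocity state the jump of the entropy variables is `([W₁], 0, -[z₂])`. Applying `R̃ᵀ` to
it, the contact component is killed by the zero eigenvalue, and the two acoustic components both
equal `[W₁] - h̄[z₂]`, so `D[W] = c̄ρ̄E′/(1+E′) ([W₁] - h̄[z₂]) (1, 0, h̄)`.
Equal pressures give `[ln ρ] = [ln z₂]`, hence `h̄[z₂] = ([W₁] - [ln ρ]) + [ln z₂] = [W₁]`.
-/

open Matrix

section RoeDissipation

variable {R : Type*} [CommRing R]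

/-- Columns: the eigenvectors of the two acoustic waves and of the contact wave at zero velocity. -/
def roeEigenvectors (C H T : R) : Matrix (Fin 3) (Fin 3) R :=
  !![1, 1, 1; -(C * H), 0, C * H; H, H - T, H]

lemma roeEigenvectors_transpose_mulVec (C H T w z : R) :
    (roeEigenvectors C H T)ᵀ *ᵥ ![w, 0, -z] = ![w - H * z, w - (H - T) * z, w - H * z] := by
  funext i
  fin_cases i <;> simp [roeEigenvectors, mulVec, dotProduct, Fin.sum_univ_three] <;> ring

lemma roeDissipation_mulVec (C H T d₀ d₁ w z : R) :
    (roeEigenvectors C H T * diagonal ![C, 0, C] * diagonal ![d₀, d₁, d₀] *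
        (roeEigenvectors C H T)ᵀ) *ᵥ ![w, 0, -z] =
      (2 * C * d₀ * (w - H * z)) • ![1, 0, H] := by
  simp only [← mulVec_mulVec, roeEigenvectors_transpose_mulVec]
  funext i
  fin_cases i <;> simp [roeEigenvectors, mulVec, dotProduct, Fin.sum_univ_three] <;> ring

end RoeDissipation

lemma div_add_one_div_div_mul_cancel {K : Type*} [Field K] (a c : K) {b : K} (hb : b ≠ 0) :
    ((a - c) / b + 1 / (b / c)) * b = a := by
  rw [one_div_div, ← add_div, div_mul_cancel₀ _ hb, sub_add_cancel]

theorem stmt14 (e σ : ℝ → ℝ) (ρL ρR p θb ρb E' : ℝ)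
    (hρL : 0 < ρL) (hρR : 0 < ρR) (hp : 0 < p) (hne : ρL ≠ ρR) :
    let z2L : ℝ := ρL / p
    let z2R : ℝ := ρR / p
    let hL : ℝ := 1 + e (p / ρL) + p / ρL
    let hR : ℝ := 1 + e (p / ρR) + p / ρR
    let SL : ℝ := -Real.log ρL + σ (p / ρL)
    let SR : ℝ := -Real.log ρR + σ (p / ρR)
    let WL : Fin 3 → ℝ := ![z2L * hL - SL, 0, -z2L]
    let WR : Fin 3 → ℝ := ![z2R * hR - SR, 0, -z2R]
    let jW1 : ℝ := (z2R * hR - SR) - (z2L * hL - SL)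
    let jz2 : ℝ := z2R - z2L
    let E : ℝ := (jW1 - (Real.log ρR - Real.log ρL)) / jz2
    let lz2 : ℝ := jz2 / (Real.log z2R - Real.log z2L)
    let hb : ℝ := E + 1 / lz2
    let cb : ℝ := Real.sqrt (θb * (1 + E') / (hb * E'))
    let Rt : Matrix (Fin 3) (Fin 3) ℝ :=
      !![1, 1, 1;
         -(cb * hb), 0, cb * hb;
         hb, hb - θb * (1 + E'), hb]
    let Dt : Matrix (Fin 3) (Fin 3) ℝ :=
      Matrix.diagonal ![ρb * E' / (2 * (1 + E')), ρb / (1 + E'), ρb * E' / (2 * (1 + E'))]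
    let D : Matrix (Fin 3) (Fin 3) ℝ := Rt * Matrix.diagonal ![cb, 0, cb] * Dt * Rtᵀ
    0 < hb * E' →
      D *ᵥ (WR - WL) = ((cb * ρb * E' / (1 + E')) * (jW1 - hb * jz2)) • ![1, 0, hb] ∧
        D *ᵥ (WR - WL) = 0 := by
  intro z2L z2R hL hR SL SR WL WR jW1 jz2 E lz2 hb cb Rt Dt D _
  have hjump : WR - WL = ![jW1, 0, -jz2] := by
    simp only [WL, WR, jW1, jz2, cons_sub_cons, sub_self, neg_sub_neg, neg_sub, empty_eq]
  have hjz2 : jz2 ≠ 0 := by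
    show ρR / p - ρL / p ≠ 0
    rw [← sub_div]
    exact div_ne_zero (sub_ne_zero.2 hne.symm) hp.ne'
  have hlog : Real.log z2R - Real.log z2L = Real.log ρR - Real.log ρL := by
    simp only [z2L, z2R, Real.log_div hρL.ne' hp.ne', Real.log_div hρR.ne' hp.ne']
    ring
  have hcontact : jW1 - hb * jz2 = 0 := by
    rw [sub_eq_zero, eq_comm]
    simp only [hb, E, lz2, hlog]
    exact div_add_one_div_div_mul_cancel _ _ hjz2
  have hD : D *ᵥ (WR - WL) = ((cb * ρb * E' / (1 + E')) * (jW1 - hb * jz2)) • ![1, 0, hb] := by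
    rw [hjump]
    refine (roeDissipation_mulVec cb hb (θb * (1 + E')) _ (ρb / (1 + E')) jW1 jz2).trans ?_
    congr 1
    rw [mul_comm 2 (1 + E'), ← div_div]
    ring
  exact ⟨hD, by rw [hD, hcontact, mul_zero, zero_smul]⟩
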